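/- Let D, D′ be graded division algebras, F and F′ graded flags on modules V, V′ with R = End_D F, R′ = End_{D′} F′, and let ψ : R → R′ be an isomorphism of graded algebras. If e ∈ R is a nonzero idempotent with e(V) = V_1 (the smallest nonzero term of F), then ψ(e)(V′) = V_1′ (the smallest nonzero term of F′). -/

import Mathlib

open MulOpposite

/-- A grading of a ring `D` by a group `G`. -/
structure RingGrading (G D : Type*) [Group G] [DecidableEq G] [Ring D] where
  comp : G → AddSubgroup D
  decomp : DirectSum.Decomposition comp
  mul_mem : ∀ {g h : G} {a b : D}, a ∈ comp g → b ∈ comp h → a * b ∈ comp (g * h)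
  one_mem : (1 : D) ∈ comp 1

/-- A graded ring is a graded division ring if every nonzero homogeneous element
is invertible. -/
def RingGrading.IsDivision {G D : Type*} [Group G] [DecidableEq G] [Ring D]
    (𝒟 : RingGrading G D) : Prop :=
  ∀ (g : G) (a : D), a ∈ 𝒟.comp g → a ≠ 0 → IsUnit a

/-- A grading of a right `D`-module `V` (modelled as a `Dᵐᵒᵖ`-module) compatible with
the grading `𝒟` of `D`. -/
structure ModuleGrading (G : Type*) [Group G] [DecidableEq G] {D : Type*} [Ring D]
    (𝒟 : RingGrading G D) (V : Type*) [AddCommGroup V] [Module Dᵐᵒᵖ V] where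
  comp : G → AddSubgroup V
  decomp : DirectSum.Decomposition comp
  smul_mem : ∀ {g h : G} {v : V} {d : D}, v ∈ comp g → d ∈ 𝒟.comp h → (op d) • v ∈ comp (g * h)

variable {G : Type*} [Group G] [DecidableEq G] {D : Type*} [Ring D] {𝒟 : RingGrading G D}
  {V : Type*} [AddCommGroup V] [Module Dᵐᵒᵖ V]

/-- A `D`-submodule `W` is homogeneous if it is the (direct) sum of its intersections
with the homogeneous components. -/
def ModuleGrading.IsHomog (𝒱 : ModuleGrading G 𝒟 V) (W : Submodule Dᵐᵒᵖ V) : Prop :=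
  W.toAddSubgroup = ⨆ g : G, (W.toAddSubgroup ⊓ 𝒱.comp g)

/-- A graded flag `0 = V₀ ⊂ V₁ ⊂ ⋯ ⊂ V_r = V` of homogeneous `D`-submodules of `V`
(the chain is constant equal to `⊤` from index `r` on). -/
structure GradedFlag (𝒱 : ModuleGrading G 𝒟 V) (r : ℕ) where
  mem : ℕ → Submodule Dᵐᵒᵖ V
  bot : mem 0 = ⊥
  strict : ∀ i < r, mem i < mem (i + 1)
  stable : ∀ i, r ≤ i → mem i = ⊤
  homog : ∀ i, 𝒱.IsHomog (mem i)

/-- The ring `End_D 𝓕` of `D`-linear endomorphisms of `V` preserving each member of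
the flag `F`, as a subring of `End_D V`. -/
def GradedFlag.flagEnd {𝒱 : ModuleGrading G 𝒟 V} {r : ℕ} (F : GradedFlag 𝒱 r) :
    Subring (Module.End Dᵐᵒᵖ V) where
  carrier := {f | ∀ i, ∀ v ∈ F.mem i, f v ∈ F.mem i}
  zero_mem' := by intro i v hv; simp
  one_mem' := by intro i v hv; simpa using hv
  add_mem' := by
    intro a b ha hb i v hv
    simpa [LinearMap.add_apply] using (F.mem i).add_mem (ha i v hv) (hb i v hv)
  neg_mem' := by
    intro a ha i v hv
    simpa [LinearMap.neg_apply] using (F.mem i).neg_mem (ha i v hv)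
  mul_mem' := by intro a b ha hb i v hv; exact ha i _ (hb i v hv)

/-- The degree-`τ` homogeneous component of `End_D V`: endomorphisms mapping `V_g`
into `V_{τg}` for every `g`. -/
def ModuleGrading.endComp (𝒱 : ModuleGrading G 𝒟 V) (τ : G) :
    AddSubgroup (Module.End Dᵐᵒᵖ V) where
  carrier := {f | ∀ (g : G), ∀ v ∈ 𝒱.comp g, f v ∈ 𝒱.comp (τ * g)}
  zero_mem' := by intro g v hv; simpa using (𝒱.comp _).zero_mem
  add_mem' := by
    intro a b ha hb g v hv
    simpa [LinearMap.add_apply] using (𝒱.comp _).add_mem (ha g v hv) (hb g v hv)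
  neg_mem' := by
    intro a ha g v hv
    simpa [LinearMap.neg_apply] using (𝒱.comp _).neg_mem (ha g v hv)

/-!
Let `p ∈ R` be a degree-one idempotent with image `V₁`, the projection along a homogeneous
complement. As `V₁` is `R`-invariant, `p` is left semicentral (`p a p = a p`). Over a graded
division ring every nonzero homogeneous vector can be mapped to any vector of `V₁` by an element
of `R`, so `V₁` is the smallest nonzero homogeneous `R`-invariant submodule, and the image of every
nonzero degree-one left semicentral element of `R` contains `V₁`. All of this is preserved by `ψ`
and, since `V` is finitely generated, also by `ψ⁻¹`. Hence the image of `ψ p` contains `V₁'` and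
that of `ψ⁻¹ p'` contains `V₁`, which gives `ψ e * ψ p = ψ p` and `p' * ψ e = ψ e`, i.e.
`V₁' ≤ range (ψ e) ≤ V₁'`.
-/

open DirectSum

instance RingGrading.instDecomposition (𝒟 : RingGrading G D) : Decomposition 𝒟.comp :=
  𝒟.decomp

instance ModuleGrading.instDecomposition (𝒱 : ModuleGrading G 𝒟 V) : Decomposition 𝒱.comp :=
  𝒱.decomp

lemma DirectSum.exists_decompose_ne_zero {ι M σ : Type*} [DecidableEq ι] [AddCommMonoid M]
    [SetLike σ M] [AddSubmonoidClass σ M] (ℳ : ι → σ) [Decomposition ℳ] {x : M} (hx : x ≠ 0) :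
    ∃ i, (decompose ℳ x i : M) ≠ 0 := by
  classical
  contrapose! hx
  rw [← sum_support_decompose ℳ x]
  exact Finset.sum_eq_zero fun i _ => hx i

/-- For an idempotent endomorphism `e`, `e * a * e = a * e` says that the range of `e` is
invariant under `a`. -/
def IsLeftSemicentral {R : Type*} [Mul R] (e : R) : Prop :=
  ∀ a, e * a * e = a * e

lemma IsLeftSemicentral.map {R S F : Type*} [Mul R] [Mul S] [EquivLike F R S]
    [MulEquivClass F R S] (ψ : F) {e : R} (he : IsLeftSemicentral e) :
    IsLeftSemicentral (ψ e) := by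
  intro b
  obtain ⟨a, rfl⟩ := EquivLike.surjective ψ b
  simp only [← map_mul, he a]

lemma Subring.mul_eq_right_of_range_le {R M : Type*} [Ring R] [AddCommGroup M] [Module R M]
    {S : Subring (Module.End R M)} {q x : S} (hq : IsIdempotentElem q)
    (h : LinearMap.range (x : Module.End R M) ≤ LinearMap.range (q : Module.End R M)) :
    q * x = x :=
  Subtype.ext ((LinearMap.IsIdempotentElem.comp_eq_right_iff (hq.map S.subtype) _).2 h)

namespace ModuleGrading

variable (𝒱 : ModuleGrading G 𝒟 V)

noncomputable def proj (k : G) : V →+ V :=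
  (𝒱.comp k).subtype.comp
    ((DFinsupp.evalAddMonoidHom k).comp (decomposeAddEquiv 𝒱.comp).toAddMonoidHom)

variable {𝒱}

lemma proj_apply (k : G) (v : V) : 𝒱.proj k v = (decompose 𝒱.comp v k : V) := rfl

lemma proj_mem (k : G) (v : V) : 𝒱.proj k v ∈ 𝒱.comp k := SetLike.coe_mem _

lemma proj_of_mem {v : V} {g : G} (hv : v ∈ 𝒱.comp g) : 𝒱.proj g v = v :=
  decompose_of_mem_same 𝒱.comp hv

lemma proj_of_mem_of_ne {v : V} {g k : G} (hv : v ∈ 𝒱.comp g) (hgk : g ≠ k) :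
    𝒱.proj k v = 0 :=
  decompose_of_mem_ne 𝒱.comp hv hgk

lemma mem_comp_of_forall_proj_eq_zero {v : V} {g : G} (h : ∀ k, k ≠ g → 𝒱.proj k v = 0) :
    v ∈ 𝒱.comp g := by
  classical
  rw [← sum_support_decompose 𝒱.comp v]
  refine sum_mem fun k _ => ?_
  obtain rfl | hkg := eq_or_ne k g
  · exact proj_mem k v
  · exact (show 𝒱.proj k v ∈ 𝒱.comp g from (h k hkg).symm ▸ zero_mem _)

lemma sum_proj_mul_right_eq_self (u : V) (g : G) {T : Finset G}
    (hT : ∀ k, 𝒱.proj k u ≠ 0 → k * g⁻¹ ∈ T) :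
    ∑ τ ∈ T, 𝒱.proj (τ * g) u = u := by
  classical
  rw [show ∑ τ ∈ T, 𝒱.proj (τ * g) u = ∑ k ∈ T.map (mulRightEmbedding g), 𝒱.proj k u by
    simp]
  conv_rhs => rw [← sum_support_decompose 𝒱.comp u]
  refine (Finset.sum_subset (fun k hk => ?_) fun k _ hk => ?_).symm
  · refine Finset.mem_map.2 ⟨k * g⁻¹, hT k fun h0 => ?_, inv_mul_cancel_right k g⟩
    exact DFinsupp.mem_support_iff.1 hk (Subtype.ext h0)
  · rw [proj_apply, DFinsupp.notMem_support_iff.1 hk, ZeroMemClass.coe_zero]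

lemma proj_op_smul_of_mem_left {w : V} {g : G} (hw : w ∈ 𝒱.comp g) (d : D) (k : G) :
    𝒱.proj k (op d • w) = op (decompose 𝒟.comp d (g⁻¹ * k) : D) • w := by
  induction d using Decomposition.inductionOn 𝒟.comp with
  | zero => simp
  | @homogeneous h m =>
    have hmw : op (m : D) • w ∈ 𝒱.comp (g * h) := 𝒱.smul_mem hw m.2
    obtain rfl | hk := eq_or_ne k (g * h)
    · rw [proj_of_mem hmw, inv_mul_cancel_left, decompose_coe, of_eq_same]
    · rw [proj_of_mem_of_ne hmw hk.symm, decompose_of_mem_ne 𝒟.comp m.2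
        (by rintro rfl; simp at hk), op_zero, zero_smul]
  | add a b ha hb =>
    simp only [op_add, add_smul, map_add, ha, hb, decompose_add, DirectSum.add_apply,
      AddMemClass.coe_add]

lemma proj_op_smul_of_mem_right {d : D} {h : G} (hd : d ∈ 𝒟.comp h) (u : V) (k : G) :
    𝒱.proj k (op d • u) = op d • 𝒱.proj (k * h⁻¹) u := by
  induction u using Decomposition.inductionOn 𝒱.comp with
  | zero => simp
  | @homogeneous g w =>
    have hdw : op d • (w : V) ∈ 𝒱.comp (g * h) := 𝒱.smul_mem w.2 hd
    obtain rfl | hk := eq_or_ne k (g * h)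
    · rw [proj_of_mem hdw, mul_inv_cancel_right, proj_of_mem w.2]
    · rw [proj_of_mem_of_ne hdw hk.symm, proj_of_mem_of_ne w.2 (by rintro rfl; simp at hk),
        smul_zero]
  | add a b ha hb => rw [smul_add, map_add, ha, hb, map_add, smul_add]

lemma IsHomog.isHomogeneous {W : Submodule Dᵐᵒᵖ V} (hW : 𝒱.IsHomog W) :
    SetLike.IsHomogeneous 𝒱.comp W := by
  intro k v hv
  change v ∈ W.toAddSubgroup at hv
  rw [hW] at hv
  refine AddSubgroup.iSup_induction (C := fun x => 𝒱.proj k x ∈ W) _ hv (fun g x hx => ?_)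
    (by simp) fun x y hx hy => by simpa using W.add_mem hx hy
  obtain rfl | hgk := eq_or_ne g k
  · simpa [proj_of_mem hx.2] using hx.1
  · simp [proj_of_mem_of_ne hx.2 hgk]

lemma isHomogeneous_bot : SetLike.IsHomogeneous 𝒱.comp (⊥ : Submodule Dᵐᵒᵖ V) := by
  intro k v hv
  rw [Submodule.mem_bot] at hv ⊢
  rw [hv, ← proj_apply, map_zero]

lemma isHomogeneous_sSup {s : Set (Submodule Dᵐᵒᵖ V)}
    (hs : ∀ W ∈ s, SetLike.IsHomogeneous 𝒱.comp W) : SetLike.IsHomogeneous 𝒱.comp (sSup s) := by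
  intro k v hv
  rw [sSup_eq_iSup'] at hv ⊢
  refine Submodule.iSup_induction _ (motive := fun x => 𝒱.proj k x ∈ _) hv
    (fun W x hx => Submodule.mem_iSup_of_mem W (hs W W.2 k hx)) (by simp)
    fun x y hx hy => by simpa using add_mem hx hy

lemma isHomogeneous_sup {W U : Submodule Dᵐᵒᵖ V} (hW : SetLike.IsHomogeneous 𝒱.comp W)
    (hU : SetLike.IsHomogeneous 𝒱.comp U) : SetLike.IsHomogeneous 𝒱.comp (W ⊔ U) := by
  rw [← sSup_pair]
  exact isHomogeneous_sSup (by simp [hW, hU])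

lemma isHomogeneous_span_singleton {w : V} {g : G} (hw : w ∈ 𝒱.comp g) :
    SetLike.IsHomogeneous 𝒱.comp (Submodule.span Dᵐᵒᵖ {w}) := by
  intro k v hv
  obtain ⟨a, rfl⟩ := Submodule.mem_span_singleton.1 hv
  change 𝒱.proj k (op (unop a) • w) ∈ _
  rw [proj_op_smul_of_mem_left hw]
  exact Submodule.smul_mem _ _ (Submodule.mem_span_singleton_self w)

/-- Some homogeneous component `a_h` of the scalar is nonzero, hence a unit, and `P` contains the
component `op a_h • w` of `a • w`. -/
lemma mem_of_smul_mem (hdiv : 𝒟.IsDivision) {P : Submodule Dᵐᵒᵖ V}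
    (hP : SetLike.IsHomogeneous 𝒱.comp P) {w : V} {g : G} (hw : w ∈ 𝒱.comp g) {a : Dᵐᵒᵖ}
    (ha : a ≠ 0) (haw : a • w ∈ P) : w ∈ P := by
  obtain ⟨h, hh⟩ := exists_decompose_ne_zero 𝒟.comp ((unop_ne_zero_iff a).2 ha)
  obtain ⟨u, hu⟩ := hdiv h _ (SetLike.coe_mem _) hh
  have hcomp : op (u : D) • w ∈ P := by
    have := hP (g * h) haw
    rwa [← op_unop a, ← proj_apply, proj_op_smul_of_mem_left hw, inv_mul_cancel_left, ← hu]
      at this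
  simpa [smul_smul, ← op_mul] using P.smul_mem (op ↑u⁻¹) hcomp

lemma toSpanSingleton_injective (hdiv : 𝒟.IsDivision) {w : V} {g : G} (hw : w ∈ 𝒱.comp g)
    (hw0 : w ≠ 0) : Function.Injective (LinearMap.toSpanSingleton Dᵐᵒᵖ V w) := by
  rw [← LinearMap.ker_eq_bot, Submodule.eq_bot_iff]
  intro a ha
  by_contra ha0
  exact hw0 <| (Submodule.mem_bot _).1 <|
    mem_of_smul_mem hdiv isHomogeneous_bot hw ha0 ((Submodule.mem_bot _).2 ha)

lemma disjoint_sup_span_singleton (hdiv : 𝒟.IsDivision) {W U : Submodule Dᵐᵒᵖ V}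
    (hW : SetLike.IsHomogeneous 𝒱.comp W) (hU : SetLike.IsHomogeneous 𝒱.comp U)
    (hWU : Disjoint W U) {w : V} {g : G} (hw : w ∈ 𝒱.comp g) (hw' : w ∉ W ⊔ U) :
    Disjoint W (U ⊔ Submodule.span Dᵐᵒᵖ {w}) := by
  rw [Submodule.disjoint_def]
  intro x hxW hx
  obtain ⟨u, hu, y, hy, rfl⟩ := Submodule.mem_sup.1 hx
  obtain ⟨a, rfl⟩ := Submodule.mem_span_singleton.1 hy
  obtain rfl : a = 0 := by
    by_contra ha
    refine hw' (mem_of_smul_mem hdiv (isHomogeneous_sup hW hU) hw ha ?_)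
    simpa using sub_mem (Submodule.mem_sup_left hxW) (Submodule.mem_sup_right hu : u ∈ W ⊔ U)
  rw [zero_smul, add_zero] at hxW ⊢
  exact Submodule.disjoint_def.1 hWU u hxW hu

/-- Take `U` maximal among the homogeneous submodules disjoint from `W`; a homogeneous vector
outside `W ⊔ U` could be added to it. -/
lemma exists_isCompl (hdiv : 𝒟.IsDivision) {W : Submodule Dᵐᵒᵖ V}
    (hW : SetLike.IsHomogeneous 𝒱.comp W) :
    ∃ U : Submodule Dᵐᵒᵖ V, SetLike.IsHomogeneous 𝒱.comp U ∧ IsCompl W U := by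
  obtain ⟨U, -, ⟨hU, hWU⟩, hmax⟩ := zorn_le_nonempty₀
    {U : Submodule Dᵐᵒᵖ V | SetLike.IsHomogeneous 𝒱.comp U ∧ Disjoint W U}
    (fun c hc hchain _ _ => ⟨sSup c, ⟨isHomogeneous_sSup fun U hU => (hc hU).1,
      hchain.directedOn.disjoint_sSup_right.2 fun U hU => (hc hU).2⟩, fun _ => le_sSup⟩)
    ⊥ ⟨isHomogeneous_bot, disjoint_bot_right⟩
  refine ⟨U, hU, hWU, codisjoint_iff.2 (eq_top_iff.2 fun v _ => ?_)⟩
  by_contra hv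
  obtain ⟨k, hk⟩ : ∃ k, 𝒱.proj k v ∉ W ⊔ U := by
    by_contra! h
    exact hv ((AddSubmonoidClass.IsHomogeneous.mem_iff 𝒱.comp _ (isHomogeneous_sup hW hU)).2 h)
  have hle := hmax ⟨isHomogeneous_sup hU (isHomogeneous_span_singleton (proj_mem k v)),
    disjoint_sup_span_singleton hdiv hW hU hWU (proj_mem k v) hk⟩ le_sup_left
  exact hk (Submodule.mem_sup_right (hle (Submodule.mem_sup_right
    (Submodule.mem_span_singleton_self _))))

lemma projection_mem_endComp_one {W U : Submodule Dᵐᵒᵖ V}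
    (hW : SetLike.IsHomogeneous 𝒱.comp W) (hU : SetLike.IsHomogeneous 𝒱.comp U)
    (hWU : IsCompl W U) : W.projection U hWU ∈ 𝒱.endComp 1 := by
  intro g v hv
  rw [one_mul]
  refine mem_comp_of_forall_proj_eq_zero fun k hk => ?_
  have hsum : 𝒱.proj k (W.projection U hWU v) + 𝒱.proj k (v - W.projection U hWU v) = 0 := by
    rw [← map_add, add_sub_cancel, proj_of_mem_of_ne hv hk.symm]
  refine Submodule.disjoint_def.1 hWU.disjoint _
    (hW k (Submodule.projection_apply_mem hWU v)) ?_
  rw [eq_neg_of_add_eq_zero_left hsum]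
  exact neg_mem (hU k (Submodule.sub_projection_mem hWU v))

lemma exists_linearMap_apply_eq_one (hdiv : 𝒟.IsDivision) {w : V} {g : G}
    (hw : w ∈ 𝒱.comp g) (hw0 : w ≠ 0) : ∃ φ : V →ₗ[Dᵐᵒᵖ] Dᵐᵒᵖ, φ w = 1 := by
  obtain ⟨U, -, hU⟩ := exists_isCompl hdiv (isHomogeneous_span_singleton hw)
  let ι := LinearEquiv.ofInjective _ (toSpanSingleton_injective hdiv hw hw0)
  refine ⟨ι.symm.toLinearMap ∘ₗ
    (LinearEquiv.ofEq _ _ (LinearMap.span_singleton_eq_range _ _ w)).toLinearMap ∘ₗ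
    Submodule.projectionOnto _ U hU, ?_⟩
  rw [LinearMap.comp_apply, LinearEquiv.coe_coe, LinearEquiv.symm_apply_eq]
  ext
  simp [ι, Submodule.projectionOnto_apply_of_mem_left hU (Submodule.mem_span_singleton_self w)]

variable (𝒱)

noncomputable def endComponentAddHom (x : Module.End Dᵐᵒᵖ V) (τ : G) : V →+ V :=
  (toAddMonoid fun g => (𝒱.proj (τ * g)).comp (x.toAddMonoidHom.comp (𝒱.comp g).subtype)).comp
    (decomposeAddEquiv 𝒱.comp).toAddMonoidHom

variable {𝒱}

lemma endComponentAddHom_apply_of_mem (x : Module.End Dᵐᵒᵖ V) (τ : G) {v : V} {g : G}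
    (hv : v ∈ 𝒱.comp g) : 𝒱.endComponentAddHom x τ v = 𝒱.proj (τ * g) (x v) := by
  simp [endComponentAddHom, decompose_of_mem 𝒱.comp hv]

lemma endComponentAddHom_map_smul (x : Module.End Dᵐᵒᵖ V) (τ : G) (a : Dᵐᵒᵖ) (v : V) :
    𝒱.endComponentAddHom x τ (a • v) = a • 𝒱.endComponentAddHom x τ v := by
  induction v using Decomposition.inductionOn 𝒱.comp with
  | zero => simp
  | @homogeneous g w =>
    rw [← op_unop a]
    induction unop a using Decomposition.inductionOn 𝒟.comp with
    | zero => simp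
    | @homogeneous h d =>
      rw [endComponentAddHom_apply_of_mem x τ (𝒱.smul_mem w.2 d.2),
        endComponentAddHom_apply_of_mem x τ w.2, map_smul, proj_op_smul_of_mem_right d.2,
        show τ * (g * h) * h⁻¹ = τ * g by group]
    | add d d' hd hd' => rw [op_add, add_smul, add_smul, map_add, hd, hd']
  | add v v' hv hv' => rw [smul_add, map_add, hv, hv', map_add, smul_add]

variable (𝒱)

/-- The degree-`τ` homogeneous component of an endomorphism: on `V_g` it is `x` followed by the
projection onto `V_{τg}`. -/
noncomputable def endComponent (x : Module.End Dᵐᵒᵖ V) (τ : G) : Module.End Dᵐᵒᵖ V :=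
  { 𝒱.endComponentAddHom x τ with map_smul' := endComponentAddHom_map_smul x τ }

variable {𝒱}

lemma endComponent_apply_of_mem (x : Module.End Dᵐᵒᵖ V) (τ : G) {v : V} {g : G}
    (hv : v ∈ 𝒱.comp g) : 𝒱.endComponent x τ v = 𝒱.proj (τ * g) (x v) :=
  endComponentAddHom_apply_of_mem x τ hv

lemma endComponent_mem_endComp (x : Module.End Dᵐᵒᵖ V) (τ : G) :
    𝒱.endComponent x τ ∈ 𝒱.endComp τ := fun g v hv => by
  rw [endComponent_apply_of_mem x τ hv]
  exact proj_mem _ _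

lemma eventually_sum_endComponent_apply (x : Module.End Dᵐᵒᵖ V) (v : V) :
    ∀ᶠ T in Filter.atTop, ∑ τ ∈ T, 𝒱.endComponent x τ v = x v := by
  classical
  induction v using Decomposition.inductionOn 𝒱.comp with
  | zero => simp
  | @homogeneous g w =>
    refine Filter.eventually_atTop.2 ⟨(decompose 𝒱.comp (x w)).support.image (· * g⁻¹),
      fun T hT => ?_⟩
    simp_rw [endComponent_apply_of_mem x _ w.2]
    refine sum_proj_mul_right_eq_self _ g fun k hk => hT (Finset.mem_image_of_mem _ ?_)
    exact DFinsupp.mem_support_iff.2 fun h0 => hk (by rw [proj_apply, h0]; rfl)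
  | add v v' hv hv' =>
    filter_upwards [hv, hv'] with T hT hT'
    simp only [map_add, Finset.sum_add_distrib, hT, hT']

lemma eventually_sum_endComponent_eq [Module.Finite Dᵐᵒᵖ V] (x : Module.End Dᵐᵒᵖ V) :
    ∀ᶠ T in Filter.atTop, ∑ τ ∈ T, 𝒱.endComponent x τ = x := by
  obtain ⟨s, hs⟩ := Module.Finite.fg_top (R := Dᵐᵒᵖ) (M := V)
  filter_upwards [(Filter.eventually_all_finset s).2 fun v _ =>
    eventually_sum_endComponent_apply x v] with T hT
  exact LinearMap.ext_on hs fun v hv => by simpa [LinearMap.sum_apply] using hT v hv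

lemma eq_zero_of_sum_mem_endComp {T : Finset G} {y : G → Module.End Dᵐᵒᵖ V}
    (hy : ∀ τ ∈ T, y τ ∈ 𝒱.endComp τ) {σ : G} (hsum : ∑ τ ∈ T, y τ ∈ 𝒱.endComp σ) {τ₀ : G}
    (hτ₀ : τ₀ ∈ T) (hne : τ₀ ≠ σ) : y τ₀ = 0 := by
  ext v
  induction v using Decomposition.inductionOn 𝒱.comp with
  | zero => simp
  | @homogeneous g w =>
    calc y τ₀ w = 𝒱.proj (τ₀ * g) (∑ τ ∈ T, y τ w) := by
          rw [map_sum, Finset.sum_eq_single_of_mem τ₀ hτ₀ fun τ hτ hττ₀ =>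
            proj_of_mem_of_ne (hy τ hτ g w w.2) ((mul_left_injective g).ne hττ₀),
            proj_of_mem (hy τ₀ hτ₀ g w w.2)]
      _ = 0 := by
          rw [← LinearMap.sum_apply]
          exact proj_of_mem_of_ne (hsum g w w.2) ((mul_left_injective g).ne hne.symm)
  | add v v' hv hv' => simp [hv, hv']

lemma proj_map_of_mem_endComp_one {x : Module.End Dᵐᵒᵖ V} (hx : x ∈ 𝒱.endComp 1) (k : G)
    (u : V) : 𝒱.proj k (x u) = x (𝒱.proj k u) := by
  induction u using Decomposition.inductionOn 𝒱.comp with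
  | zero => simp
  | @homogeneous g w =>
    have hxw : x w ∈ 𝒱.comp g := by simpa using hx g w w.2
    obtain rfl | hgk := eq_or_ne g k
    · rw [proj_of_mem hxw, proj_of_mem w.2]
    · rw [proj_of_mem_of_ne hxw hgk, proj_of_mem_of_ne w.2 hgk, map_zero]
  | add u u' hu hu' => simp only [map_add, hu, hu']

lemma isHomogeneous_range_of_mem_endComp_one {x : Module.End Dᵐᵒᵖ V} (hx : x ∈ 𝒱.endComp 1) :
    SetLike.IsHomogeneous 𝒱.comp (LinearMap.range x) := by
  rintro k _ ⟨u, rfl⟩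
  exact ⟨_, (proj_map_of_mem_endComp_one hx k u).symm⟩

end ModuleGrading

namespace GradedFlag

open ModuleGrading

variable {𝒱 : ModuleGrading G 𝒟 V} {r : ℕ} (F : GradedFlag 𝒱 r)

lemma monotone_mem : Monotone F.mem := by
  refine monotone_nat_of_le_succ fun i => ?_
  rcases lt_or_ge i r with h | h
  · exact (F.strict i h).le
  · rw [F.stable i h, F.stable (i + 1) (h.trans i.le_succ)]

lemma first_ne_bot (hr : 0 < r) : F.mem 1 ≠ ⊥ := by
  simpa [F.bot] using (F.strict 0 hr).ne'

lemma ne_zero_of_range_eq_first (hr : 0 < r) {p : F.flagEnd}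
    (hp : LinearMap.range (p : Module.End Dᵐᵒᵖ V) = F.mem 1) : p ≠ 0 := by
  rintro rfl
  exact F.first_ne_bot hr (by simpa using hp.symm)

lemma mem_flagEnd_of_range_le {x : Module.End Dᵐᵒᵖ V} (hx : LinearMap.range x ≤ F.mem 1) :
    x ∈ F.flagEnd := by
  intro i v hv
  rcases Nat.eq_zero_or_pos i with rfl | hi
  · rw [F.bot, Submodule.mem_bot] at hv ⊢
    rw [hv, map_zero]
  · exact F.monotone_mem hi (hx ⟨v, rfl⟩)

/-- Every map `V → V₁` lies in `End_D 𝓕`, and a nonzero homogeneous vector of `W` is sent to any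
`v ∈ V₁` by `u ↦ φ u • v`, where `φ` is a functional with value `1` on it. -/
lemma first_le_of_isHomogeneous (hdiv : 𝒟.IsDivision) {W : Submodule Dᵐᵒᵖ V}
    (hW : SetLike.IsHomogeneous 𝒱.comp W) (hW0 : W ≠ ⊥)
    (hinv : ∀ a ∈ F.flagEnd, ∀ w ∈ W, a w ∈ W) : F.mem 1 ≤ W := by
  obtain ⟨u, hu, hu0⟩ := Submodule.exists_mem_ne_zero_of_ne_bot hW0
  obtain ⟨k, hk⟩ := exists_decompose_ne_zero 𝒱.comp hu0
  obtain ⟨φ, hφ⟩ := exists_linearMap_apply_eq_one hdiv (proj_mem k u) hk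
  intro v hv
  have hx : φ.smulRight v ∈ F.flagEnd := by
    refine F.mem_flagEnd_of_range_le ?_
    rintro _ ⟨z, rfl⟩
    exact (F.mem 1).smul_mem _ hv
  have := hinv _ hx _ (hW k hu)
  rwa [LinearMap.smulRight_apply, ← proj_apply, hφ, one_smul] at this

lemma first_le_range (hdiv : 𝒟.IsDivision) {q : F.flagEnd}
    (hq1 : (q : Module.End Dᵐᵒᵖ V) ∈ 𝒱.endComp 1) (hq0 : q ≠ 0) (hq : IsLeftSemicentral q) :
    F.mem 1 ≤ LinearMap.range (q : Module.End Dᵐᵒᵖ V) := by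
  refine F.first_le_of_isHomogeneous hdiv (isHomogeneous_range_of_mem_endComp_one hq1)
    (fun h => hq0 (Subtype.ext (LinearMap.range_eq_bot.1 h))) ?_
  rintro a ha _ ⟨z, rfl⟩
  refine ⟨a ((q : Module.End Dᵐᵒᵖ V) z), ?_⟩
  simpa using LinearMap.congr_fun (congrArg Subtype.val (hq ⟨a, ha⟩)) z

lemma exists_isIdempotentElem_range_eq_first (hdiv : 𝒟.IsDivision) :
    ∃ p : F.flagEnd, (p : Module.End Dᵐᵒᵖ V) ∈ 𝒱.endComp 1 ∧ IsIdempotentElem p ∧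
      LinearMap.range (p : Module.End Dᵐᵒᵖ V) = F.mem 1 := by
  obtain ⟨U, hU, hWU⟩ := exists_isCompl hdiv (F.homog 1).isHomogeneous
  exact ⟨⟨_, F.mem_flagEnd_of_range_le (Submodule.range_projection hWU).le⟩,
    projection_mem_endComp_one (F.homog 1).isHomogeneous hU hWU,
    Subtype.ext (Submodule.isIdempotentElem_projection hWU), Submodule.range_projection hWU⟩

lemma isLeftSemicentral_of_range_eq {e : F.flagEnd} (he : IsIdempotentElem e) {i : ℕ}
    (hrange : LinearMap.range (e : Module.End Dᵐᵒᵖ V) = F.mem i) : IsLeftSemicentral e := by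
  intro a
  rw [mul_assoc]
  refine Subring.mul_eq_right_of_range_le he ?_
  rw [Subring.coe_mul, Module.End.mul_eq_comp, LinearMap.range_comp, hrange,
    Submodule.map_le_iff_le_comap]
  exact fun v hv => a.2 i v hv

lemma endComponent_mem_flagEnd {x : Module.End Dᵐᵒᵖ V} (hx : x ∈ F.flagEnd) (τ : G) :
    𝒱.endComponent x τ ∈ F.flagEnd := by
  classical
  intro i v hv
  have hW := (F.homog i).isHomogeneous
  rw [← sum_support_decompose 𝒱.comp v, map_sum]
  refine sum_mem fun g _ => ?_
  rw [endComponent_apply_of_mem x τ (SetLike.coe_mem _)]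
  exact hW _ (hx i _ (hW g hv))

/-- An endomorphism of a finitely generated graded module is the sum of finitely many homogeneous
components, and `ψ` maps those of `ψ⁻¹ x` to homogeneous components of `x`. -/
lemma symm_mem_endComp [Module.Finite Dᵐᵒᵖ V] {D' : Type*} [Ring D'] {𝒟' : RingGrading G D'}
    {V' : Type*} [AddCommGroup V'] [Module D'ᵐᵒᵖ V'] {𝒱' : ModuleGrading G 𝒟' V'} {r' : ℕ}
    {F' : GradedFlag 𝒱' r'} (ψ : F.flagEnd ≃+* F'.flagEnd)
    (hψ : ∀ (τ : G) (f : F.flagEnd),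
      (f : Module.End Dᵐᵒᵖ V) ∈ 𝒱.endComp τ → (ψ f : Module.End D'ᵐᵒᵖ V') ∈ 𝒱'.endComp τ)
    {x : F'.flagEnd} {σ : G} (hx : (x : Module.End D'ᵐᵒᵖ V') ∈ 𝒱'.endComp σ) :
    (ψ.symm x : Module.End Dᵐᵒᵖ V) ∈ 𝒱.endComp σ := by
  set f := ψ.symm x
  obtain ⟨T, hT⟩ := (eventually_sum_endComponent_eq (𝒱 := 𝒱) f).exists
  let c : G → F.flagEnd := fun τ => ⟨𝒱.endComponent f τ, F.endComponent_mem_flagEnd f.2 τ⟩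
  have hc : ∀ τ ∈ T, τ ≠ σ → c τ = 0 := by
    intro τ hτ hτσ
    have hsum : ∑ τ ∈ T, c τ = f := Subtype.ext (by simpa [c] using hT)
    have hψc : (ψ (c τ) : Module.End D'ᵐᵒᵖ V') = 0 := by
      refine eq_zero_of_sum_mem_endComp (y := fun τ => (ψ (c τ) : Module.End D'ᵐᵒᵖ V'))
        (fun τ _ => hψ τ _ (endComponent_mem_endComp _ τ)) ?_ hτ hτσ
      rwa [← AddSubmonoidClass.coe_finsetSum, ← map_sum, hsum, ψ.apply_symm_apply]
    simpa using hψc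
  rw [← hT]
  refine sum_mem fun τ hτ => ?_
  obtain rfl | hτσ := eq_or_ne τ σ
  · exact endComponent_mem_endComp _ _
  · rw [show 𝒱.endComponent f τ = 0 from congrArg Subtype.val (hc τ hτ hτσ)]
    exact zero_mem _

end GradedFlag

theorem graded_iso_maps_first_member_projection_general
    {D' : Type*} [Ring D'] {𝒟' : RingGrading G D'}
    {V' : Type*} [AddCommGroup V'] [Module D'ᵐᵒᵖ V']
    (hdiv : 𝒟.IsDivision) (hdiv' : 𝒟'.IsDivision)
    [Module.Finite Dᵐᵒᵖ V]
    {𝒱 : ModuleGrading G 𝒟 V} {𝒱' : ModuleGrading G 𝒟' V'}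
    {r r' : ℕ} (F : GradedFlag 𝒱 r) (F' : GradedFlag 𝒱' r') (hr : 0 < r) (hr' : 0 < r')
    (ψ : F.flagEnd ≃+* F'.flagEnd)
    (hψ : ∀ (τ : G) (f : F.flagEnd),
      (f : Module.End Dᵐᵒᵖ V) ∈ 𝒱.endComp τ → (ψ f : Module.End D'ᵐᵒᵖ V') ∈ 𝒱'.endComp τ)
    (e : Module.End Dᵐᵒᵖ V) (he : e ∈ F.flagEnd) (hee : e * e = e)
    (hrange : LinearMap.range e = F.mem 1) :
    LinearMap.range ((ψ ⟨e, he⟩ : Module.End D'ᵐᵒᵖ V')) = F'.mem 1 := by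
  obtain ⟨p, hp1, hpp, hprange⟩ := F.exists_isIdempotentElem_range_eq_first hdiv
  obtain ⟨p', hp'1, hp'p', hp'range⟩ := F'.exists_isIdempotentElem_range_eq_first hdiv'
  set e₀ : F.flagEnd := ⟨e, he⟩
  apply le_antisymm
  · have hfe : ψ.symm p' * e₀ = e₀ := by
      refine Subring.mul_eq_right_of_range_le (hp'p'.map ψ.symm) ?_
      rw [show (e₀ : Module.End Dᵐᵒᵖ V) = e from rfl, hrange]
      exact F.first_le_range hdiv (F.symm_mem_endComp ψ hψ hp'1)
        (by simpa using F'.ne_zero_of_range_eq_first hr' hp'range)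
        ((F'.isLeftSemicentral_of_range_eq hp'p' hp'range).map ψ.symm)
    calc LinearMap.range (ψ e₀ : Module.End D'ᵐᵒᵖ V')
        = LinearMap.range ((p' * ψ e₀ : F'.flagEnd) : Module.End D'ᵐᵒᵖ V') := by
          rw [← ψ.apply_symm_apply p', ← map_mul, hfe]
      _ ≤ LinearMap.range (p' : Module.End D'ᵐᵒᵖ V') := LinearMap.range_comp_le_range _ _
      _ = F'.mem 1 := hp'range
  · have hep : e₀ * p = p :=
      Subring.mul_eq_right_of_range_le (Subtype.ext hee) (by rw [hprange, ← hrange])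
    calc F'.mem 1 ≤ LinearMap.range (ψ p : Module.End D'ᵐᵒᵖ V') :=
          F'.first_le_range hdiv' (hψ 1 p hp1)
            (by simpa using F.ne_zero_of_range_eq_first hr hprange)
            ((F.isLeftSemicentral_of_range_eq hpp hprange).map ψ)
      _ = LinearMap.range ((ψ e₀ * ψ p : F'.flagEnd) : Module.End D'ᵐᵒᵖ V') := by
          rw [← map_mul, hep]
      _ ≤ LinearMap.range (ψ e₀ : Module.End D'ᵐᵒᵖ V') := LinearMap.range_comp_le_range _ _

/-- a graded algebra isomorphism `ψ : End_D 𝓕 → End_{D'} 𝓕'` maps an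
idempotent `e` with `e(V) = V₁` to an endomorphism with image `V₁'`. -/
theorem graded_iso_maps_first_member_projection
    {D' : Type*} [Ring D'] {𝒟' : RingGrading G D'}
    {V' : Type*} [AddCommGroup V'] [Module D'ᵐᵒᵖ V']
    (hdiv : 𝒟.IsDivision) (hdiv' : 𝒟'.IsDivision)
    [Module.Finite Dᵐᵒᵖ V] [Module.Finite D'ᵐᵒᵖ V']
    {𝒱 : ModuleGrading G 𝒟 V} {𝒱' : ModuleGrading G 𝒟' V'}
    {r r' : ℕ} (F : GradedFlag 𝒱 r) (F' : GradedFlag 𝒱' r') (hr : 0 < r) (hr' : 0 < r')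
    (ψ : F.flagEnd ≃+* F'.flagEnd)
    (hψ : ∀ (τ : G) (f : F.flagEnd),
      (f : Module.End Dᵐᵒᵖ V) ∈ 𝒱.endComp τ → (ψ f : Module.End D'ᵐᵒᵖ V') ∈ 𝒱'.endComp τ)
    (e : Module.End Dᵐᵒᵖ V) (he : e ∈ F.flagEnd) (hne : e ≠ 0) (hee : e * e = e)
    (hrange : LinearMap.range e = F.mem 1) :
    LinearMap.range ((ψ ⟨e, he⟩ : Module.End D'ᵐᵒᵖ V')) = F'.mem 1 :=
  graded_iso_maps_first_member_projection_general hdiv hdiv' F F' hr hr' ψ hψ e he hee hrange
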